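/- arXiv:2211.16804 — 4 statements merged into one kernel-verified Lean document; each statement's English description precedes it below -/
import Mathlib

section
/- Let g(x) = ‖x‖₁ on ℝ^n and ν > 0. Then ∂_B prox_{νg} is a strong linear Newton approximation of prox_{νg} at every x ∈ ℝ^n: for each x there exist constants C > 0 and δ > 0 such that for every y ∈ ℝ^n with ‖y − x‖₂ < δ and every V ∈ ∂_B prox_{νg}(y), one has ‖prox_{νg}(x) − prox_{νg}(y) − V(x − y)‖₂ ≤ C ‖x − y‖₂². -/
/-!
The proximal map of `ν ‖·‖₁` acts coordinatewise by soft thresholding, which is piecewise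
affine with breakpoints `±ν`. For `y` close to `x`, each coordinate of `y` either lies in a
common affine piece with the corresponding coordinate of `x`, or sits on a breakpoint and then
equals it. Every Jacobian at a point close to `y` is diagonal with entries the slopes of these
pieces, so every `V ∈ ∂_B prox(y)` satisfies `V (x - y) = prox x - prox y` exactly.
-/

open Filter Topology

/-- The B-subdifferential of a map `F : ℝ^n → ℝ^n` at `x`: the set of limits of
derivatives `∇F(x^(k))` along sequences `x^(k) → x` of differentiability points of `F`. -/
def Bsubdiff {n : ℕ} (F : EuclideanSpace ℝ (Fin n) → EuclideanSpace ℝ (Fin n))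
    (x : EuclideanSpace ℝ (Fin n)) :
    Set (EuclideanSpace ℝ (Fin n) →L[ℝ] EuclideanSpace ℝ (Fin n)) :=
  {V | ∃ u : ℕ → EuclideanSpace ℝ (Fin n),
      Filter.Tendsto u Filter.atTop (nhds x) ∧
      (∀ k, DifferentiableAt ℝ F (u k)) ∧
      Filter.Tendsto (fun k => fderiv ℝ F (u k)) Filter.atTop (nhds V)}

noncomputable def softThreshold (ν t : ℝ) : ℝ :=
  if ν < t then t - ν else if t < -ν then t + ν else 0

section SoftThreshold

variable {ν t : ℝ}

lemma softThreshold_of_abs_le (h : |t| ≤ ν) : softThreshold ν t = 0 := by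
  rcases abs_le.mp h with ⟨h₁, h₂⟩
  rw [softThreshold, if_neg (by linarith), if_neg (by linarith)]

lemma softThreshold_of_lt (h : ν < t) : softThreshold ν t = t - ν := if_pos h

lemma softThreshold_of_lt_neg (hν : 0 ≤ ν) (h : t < -ν) : softThreshold ν t = t + ν := by
  rw [softThreshold, if_neg (by linarith), if_pos h]

/-- The objective `s ↦ ν |s| + (s - w)² / 2` is `1`-strongly convex with minimizer
`softThreshold ν w`. -/
lemma softThreshold_objective_add_sq_le (hν : 0 ≤ ν) (w s : ℝ) :
    ν * |softThreshold ν w| + (softThreshold ν w - w) ^ 2 / 2 + (s - softThreshold ν w) ^ 2 / 2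
      ≤ ν * |s| + (s - w) ^ 2 / 2 := by
  have h₁ : s ≤ |s| := le_abs_self s
  have h₂ : -|s| ≤ s := neg_abs_le s
  unfold softThreshold
  split_ifs with hw₁ hw₂
  · rw [abs_of_pos (by linarith)]; nlinarith
  · rw [abs_of_neg (by linarith)]; nlinarith
  · push Not at hw₁ hw₂
    rw [abs_zero]
    nlinarith [mul_nonneg (by linarith : (0:ℝ) ≤ |s| - s) (by linarith : (0:ℝ) ≤ ν + w),
      mul_nonneg (by linarith : (0:ℝ) ≤ |s| + s) (by linarith : (0:ℝ) ≤ ν - w)]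

lemma deriv_softThreshold_eventuallyEq_zero (h : |t| < ν) :
    deriv (softThreshold ν) =ᶠ[𝓝 t] fun _ => 0 := by
  have : softThreshold ν =ᶠ[𝓝 t] fun _ => 0 := by
    filter_upwards [(isOpen_lt continuous_abs continuous_const).mem_nhds h] with s hs
    exact softThreshold_of_abs_le (le_of_lt hs)
  simpa using this.deriv

lemma deriv_softThreshold_eventuallyEq_one_of_lt (h : ν < t) :
    deriv (softThreshold ν) =ᶠ[𝓝 t] fun _ => 1 := by
  have : softThreshold ν =ᶠ[𝓝 t] fun s => s - ν := by
    filter_upwards [lt_mem_nhds h] with s hs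
    exact softThreshold_of_lt hs
  simpa using this.deriv

lemma deriv_softThreshold_eventuallyEq_one_of_lt_neg (hν : 0 ≤ ν) (h : t < -ν) :
    deriv (softThreshold ν) =ᶠ[𝓝 t] fun _ => 1 := by
  have : softThreshold ν =ᶠ[𝓝 t] fun s => s + ν := by
    filter_upwards [gt_mem_nhds h] with s hs
    exact softThreshold_of_lt_neg hν hs
  simpa using this.deriv

end SoftThreshold

lemma eventually_deriv_softThreshold_mul_sub {ν : ℝ} (hν : 0 < ν) (x : ℝ) :
    ∀ᶠ y in 𝓝 x, ∀ᶠ u in 𝓝 y,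
      deriv (softThreshold ν) u * (x - y) = softThreshold ν x - softThreshold ν y := by
  rcases lt_trichotomy |x| ν with hx | hx | hx
  · filter_upwards [(isOpen_lt continuous_abs continuous_const).mem_nhds hx] with y hy
    filter_upwards [deriv_softThreshold_eventuallyEq_zero hy] with u hu
    rw [hu, softThreshold_of_abs_le hx.le, softThreshold_of_abs_le hy.le]
    ring
  · rcases (abs_eq hν.le).mp hx with hx' | hx' <;> subst x
    · filter_upwards [lt_mem_nhds hν] with y hy
      rcases lt_trichotomy y ν with hyx | rfl | hyx
      · have hy' : |y| < ν := abs_lt.mpr ⟨by linarith, hyx⟩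
        filter_upwards [deriv_softThreshold_eventuallyEq_zero hy'] with u hu
        rw [hu, softThreshold_of_abs_le hx.le, softThreshold_of_abs_le hy'.le]
        ring
      · simp
      · filter_upwards [deriv_softThreshold_eventuallyEq_one_of_lt hyx] with u hu
        rw [hu, softThreshold_of_abs_le hx.le, softThreshold_of_lt hyx]
        ring
    · filter_upwards [gt_mem_nhds (neg_neg_of_pos hν)] with y hy
      rcases lt_trichotomy y (-ν) with hyx | rfl | hyx
      · filter_upwards [deriv_softThreshold_eventuallyEq_one_of_lt_neg hν.le hyx] with u hu
        rw [hu, softThreshold_of_abs_le hx.le, softThreshold_of_lt_neg hν.le hyx]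
        ring
      · simp
      · have hy' : |y| < ν := abs_lt.mpr ⟨hyx, by linarith⟩
        filter_upwards [deriv_softThreshold_eventuallyEq_zero hy'] with u hu
        rw [hu, softThreshold_of_abs_le hx.le, softThreshold_of_abs_le hy'.le]
        ring
  · rcases lt_abs.mp hx with hx | hx
    · filter_upwards [lt_mem_nhds hx] with y hy
      filter_upwards [deriv_softThreshold_eventuallyEq_one_of_lt hy] with u hu
      rw [hu, softThreshold_of_lt hx, softThreshold_of_lt hy]
      ring
    · have hx : x < -ν := by linarith
      filter_upwards [gt_mem_nhds hx] with y hy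
      filter_upwards [deriv_softThreshold_eventuallyEq_one_of_lt_neg hν.le hy] with u hu
      rw [hu, softThreshold_of_lt_neg hν.le hx, softThreshold_of_lt_neg hν.le hy]
      ring

section Coordinatewise

variable {ι : Type*} [Fintype ι] {φ : ℝ → ℝ} {F : EuclideanSpace ℝ ι → EuclideanSpace ℝ ι}

lemma differentiableAt_of_coordwise [DecidableEq ι] (hF : ∀ w i, F w i = φ (w i))
    {u : EuclideanSpace ℝ ι} (hu : DifferentiableAt ℝ F u) (i : ι) :
    DifferentiableAt ℝ φ (u i) := by
  let line : ℝ → EuclideanSpace ℝ ι := fun t => u + (t - u i) • EuclideanSpace.single i 1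
  have hφ : φ = fun t => F (line t) i := by
    funext t
    simp [hF, line]
  have hline : line (u i) = u := by simp [line]
  have hcoord : DifferentiableAt ℝ (fun w => F w i) (line (u i)) := by
    rw [hline]
    exact (EuclideanSpace.proj (𝕜 := ℝ) i).differentiableAt.comp u hu
  rw [hφ]
  exact hcoord.comp (u i) (by fun_prop)

lemma fderiv_apply_of_coordwise (hF : ∀ w i, F w i = φ (w i))
    {u : EuclideanSpace ℝ ι} (hu : DifferentiableAt ℝ F u) (v : EuclideanSpace ℝ ι) (i : ι) :
    fderiv ℝ F u v i = deriv φ (u i) * v i := by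
  classical
  have hcoord :
      HasFDerivAt (fun w => F w i) ((EuclideanSpace.proj (𝕜 := ℝ) i).comp (fderiv ℝ F u)) u :=
    (EuclideanSpace.proj (𝕜 := ℝ) i).hasFDerivAt.comp u hu.hasFDerivAt
  have hchain :
      HasFDerivAt (fun w => F w i) (deriv φ (u i) • EuclideanSpace.proj (𝕜 := ℝ) i) u := by
    simp only [hF]
    exact (differentiableAt_of_coordwise hF hu i).hasDerivAt.comp_hasFDerivAt u
      (EuclideanSpace.proj (𝕜 := ℝ) i).hasFDerivAt
  exact congrArg (· v) (hcoord.unique hchain)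

end Coordinatewise

lemma apply_sub_eq_of_mem_Bsubdiff {n : ℕ} {φ : ℝ → ℝ}
    {F : EuclideanSpace ℝ (Fin n) → EuclideanSpace ℝ (Fin n)} (hF : ∀ w i, F w i = φ (w i))
    {x y : EuclideanSpace ℝ (Fin n)}
    (hxy : ∀ i, ∀ᶠ t in 𝓝 (y i), deriv φ t * (x i - y i) = φ (x i) - φ (y i))
    {V : EuclideanSpace ℝ (Fin n) →L[ℝ] EuclideanSpace ℝ (Fin n)} (hV : V ∈ Bsubdiff F y) :
    V (x - y) = F x - F y := by
  obtain ⟨u, hu, hud, hVu⟩ := hV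
  have hlim : Tendsto (fun k => fderiv ℝ F (u k) (x - y)) atTop (𝓝 (V (x - y))) :=
    ((ContinuousLinearMap.apply ℝ _ (x - y)).continuous.tendsto V).comp hVu
  refine tendsto_nhds_unique hlim (tendsto_const_nhds.congr' ?_)
  have hcoord : ∀ i, ∀ᶠ k in atTop, deriv φ (u k i) * (x i - y i) = φ (x i) - φ (y i) :=
    fun i => (((EuclideanSpace.proj (𝕜 := ℝ) i).continuous.tendsto y).comp hu).eventually (hxy i)
  filter_upwards [eventually_all.mpr hcoord] with k hk
  ext i
  simp only [PiLp.sub_apply, fderiv_apply_of_coordwise hF (hud k), hF, hk i]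

lemma prox_apply_eq_softThreshold {ι : Type*} [Fintype ι] {ν : ℝ} (hν : 0 ≤ ν)
    {w p : EuclideanSpace ℝ ι}
    (hp : IsMinOn (fun z : EuclideanSpace ℝ ι => ν * (∑ i, |z i|) + ‖z - w‖ ^ 2 / 2) Set.univ p)
    (i : ι) : p i = softThreshold ν (w i) := by
  set f := fun z : EuclideanSpace ℝ ι => ν * (∑ i, |z i|) + ‖z - w‖ ^ 2 / 2
  set q : EuclideanSpace ℝ ι := WithLp.toLp 2 fun i => softThreshold ν (w i)
  have hq : ∀ z, f q + ‖z - q‖ ^ 2 / 2 ≤ f z := by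
    intro z
    have := Finset.sum_le_sum fun i (_ : i ∈ Finset.univ) =>
      softThreshold_objective_add_sq_le hν (w i) (z i)
    simp only [f, q, EuclideanSpace.real_norm_sq_eq, PiLp.sub_apply, Finset.mul_sum,
      Finset.sum_div, ← Finset.sum_add_distrib] at this ⊢
    linarith
  have hpq : ‖p - q‖ ^ 2 ≤ 0 := by linarith [hq p, isMinOn_iff.mp hp q (Set.mem_univ q)]
  have hpq' : p = q := by
    rw [← sub_eq_zero, ← norm_eq_zero]
    exact pow_eq_zero_iff two_ne_zero |>.mp (le_antisymm hpq (by positivity))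
  rw [hpq']

/-- For `g = ‖·‖₁` and `ν > 0`, `∂_B prox_{νg}` is a strong linear Newton
approximation of `prox_{νg}` at every `x`: there exist `C > 0` and `δ > 0` such that for
every `y` with `‖y − x‖ < δ` and every `V ∈ ∂_B prox_{νg}(y)`,
`‖prox_{νg}(x) − prox_{νg}(y) − V(x − y)‖ ≤ C ‖x − y‖²`. -/
theorem statement6 {n : ℕ} (ν : ℝ) (hν : 0 < ν)
    (prox : EuclideanSpace ℝ (Fin n) → EuclideanSpace ℝ (Fin n))
    (hprox : ∀ x, IsMinOn
      (fun z : EuclideanSpace ℝ (Fin n) => ν * (∑ i, |z i|) + ‖z - x‖ ^ 2 / 2)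
      Set.univ (prox x))
    (x : EuclideanSpace ℝ (Fin n)) :
    ∃ C > (0 : ℝ), ∃ δ > (0 : ℝ), ∀ y : EuclideanSpace ℝ (Fin n), ‖y - x‖ < δ →
      ∀ V ∈ Bsubdiff prox y, ‖prox x - prox y - V (x - y)‖ ≤ C * ‖x - y‖ ^ 2 := by
  have hprox_eq : ∀ w i, prox w i = softThreshold ν (w i) :=
    fun w => prox_apply_eq_softThreshold hν.le (hprox w)
  have hnear : ∀ᶠ y in 𝓝 x, ∀ i, ∀ᶠ t in 𝓝 (y i),
      deriv (softThreshold ν) t * (x i - y i) = softThreshold ν (x i) - softThreshold ν (y i) :=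
    eventually_all.mpr fun i =>
      ((EuclideanSpace.proj (𝕜 := ℝ) i).continuous.tendsto x).eventually
        (eventually_deriv_softThreshold_mul_sub hν (x i))
  obtain ⟨δ, hδ, hball⟩ := Metric.eventually_nhds_iff.mp hnear
  refine ⟨1, one_pos, δ, hδ, fun y hy V hV => ?_⟩
  have hVxy := apply_sub_eq_of_mem_Bsubdiff hprox_eq (hball (by rwa [dist_eq_norm])) hV
  rw [hVxy, sub_self, norm_zero]
  positivity
end

section
/- Let g(x) = ‖x‖₂ on ℝ^n and ν > 0. Then ∂_B prox_{νg} is a strong linear Newton approximation of prox_{νg} at every x ∈ ℝ^n: for each x there exist constants C > 0 and δ > 0 such that for every y ∈ ℝ^n with ‖y − x‖₂ < δ and every V ∈ ∂_B prox_{νg}(y), one has ‖prox_{νg}(x) − prox_{νg}(y) − V(x − y)‖₂ ≤ C ‖x − y‖₂². -/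
/-!
The proximal map of `ν‖·‖` is block soft-thresholding `s(z) = (1 - ν / ‖z‖)₊ z`: since `x - s(x)`
is a subgradient of `ν‖·‖` at `s(x)`, the objective exceeds its value at `s(x)` by at least
`‖z - s(x)‖² / 2`, so `s(x)` is the unique minimiser.

The map `s` vanishes on the ball of radius `ν`, equals `z - ν z / ‖z‖` outside it, and is not
differentiable on the sphere `‖z‖ = ν`. Hence a differentiability point `u` near `x` lies on the
same side of the sphere as `x`, and the linearisation error is either zero or `ν` times the
second-order remainder of `z ↦ z / ‖z‖`, which is at most `4‖x - u‖² / (‖u‖ ‖x‖) ≤ 4‖x - u‖² / ν²`.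
This bound passes to limits of derivatives, i.e. to every element of `∂_B s`.
-/

open Filter Topology

open scoped RealInnerProductSpace

theorem abs_sq_mul_sub_sub_mul_le {a b t ε : ℝ} (ha : 0 < a) (hb : 0 < b)
    (ht : |t| ≤ a * ε) (hba : |b - a| ≤ ε) (hb2 : b ^ 2 = a ^ 2 + 2 * t + ε ^ 2) :
    |a ^ 2 * (b - a) - t * b| ≤ 3 * a * ε ^ 2 := by
  have hε : 0 ≤ ε := (abs_nonneg _).trans hba
  have hab : 0 < a + b := by positivity
  -- Multiplying by `a + b` turns `b - a` into `2t + ε²`, exposing the quadratic terms.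
  have hid : (a ^ 2 * (b - a) - t * b) * (a + b) =
      -(t * (b - a) * (2 * a + b)) + a ^ 2 * ε ^ 2 := by
    linear_combination a ^ 2 * hb2
  have hprod : |t * (b - a)| ≤ a * ε * ε := by
    rw [abs_mul]; exact mul_le_mul ht hba (abs_nonneg _) (by positivity)
  rw [← mul_le_mul_iff_of_pos_right hab, ← abs_of_pos hab, ← abs_mul, abs_of_pos hab, hid]
  calc |-(t * (b - a) * (2 * a + b)) + a ^ 2 * ε ^ 2|
      ≤ |t * (b - a)| * (2 * a + b) + a ^ 2 * ε ^ 2 := by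
        refine (abs_add_le _ _).trans ?_
        rw [abs_neg, abs_mul, abs_of_pos (by positivity : 0 < 2 * a + b),
          abs_of_nonneg (by positivity : 0 ≤ a ^ 2 * ε ^ 2)]
    _ ≤ a * ε * ε * (2 * a + b) + a ^ 2 * ε ^ 2 := by gcongr
    _ ≤ 3 * a * ε ^ 2 * (a + b) := by nlinarith [mul_nonneg (mul_nonneg ha.le (sq_nonneg ε)) hb.le]

theorem not_differentiableAt_max_zero : ¬ DifferentiableAt ℝ (fun t : ℝ => max t 0) 0 := by
  intro h
  refine not_differentiableAt_abs_zero ?_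
  have habs : (abs : ℝ → ℝ) = fun t => 2 * max t 0 - t := by
    funext t
    rcases le_total t 0 with ht | ht
    · rw [max_eq_right ht, abs_of_nonpos ht]; ring
    · rw [max_eq_left ht, abs_of_nonneg ht]; ring
  rw [habs]
  exact (h.const_mul 2).sub differentiableAt_id

section InnerProductSpace

variable {E : Type*} [NormedAddCommGroup E] [InnerProductSpace ℝ E]

theorem add_norm_sub_sq_le_of_subgradient {h : E → ℝ} {x s : E}
    (hs : ∀ z, h s + ⟪x - s, z - s⟫ ≤ h z) (z : E) :
    h s + ‖s - x‖ ^ 2 / 2 + ‖z - s‖ ^ 2 / 2 ≤ h z + ‖z - x‖ ^ 2 / 2 := by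
  have hsplit := norm_sub_sq_real (z - s) (x - s)
  rw [sub_sub_sub_cancel_right, real_inner_comm, norm_sub_rev x s] at hsplit
  linarith [hs z]

noncomputable def normalizeFDeriv (u : E) : E →L[ℝ] E :=
  ‖u‖⁻¹ • ContinuousLinearMap.id ℝ E - (‖u‖ ^ 3)⁻¹ • (innerSL ℝ u).smulRight u

theorem hasFDerivAt_norm_inv {u : E} (hu : u ≠ 0) :
    HasFDerivAt (fun z : E => ‖z‖⁻¹) (-(‖u‖ ^ 3)⁻¹ • innerSL ℝ u) u := by
  have hu' : ‖u‖ ≠ 0 := norm_ne_zero_iff.2 hu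
  have hnorm := (hasStrictFDerivAt_norm_sq u).hasFDerivAt.sqrt (by positivity)
  simp only [Real.sqrt_sq (norm_nonneg _)] at hnorm
  refine ((hasDerivAt_inv hu').comp_hasFDerivAt u hnorm).congr_fderiv ?_
  ext h
  simp only [smul_apply, smul_eq_mul, nsmul_eq_mul]
  field_simp
  ring

theorem hasFDerivAt_normalize {u : E} (hu : u ≠ 0) :
    HasFDerivAt (fun z : E => ‖z‖⁻¹ • z) (normalizeFDeriv u) u := by
  refine ((hasFDerivAt_norm_inv hu).smul (hasFDerivAt_id u)).congr_fderiv ?_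
  ext h
  simp [normalizeFDeriv, sub_eq_add_neg, mul_smul]

theorem normalize_sub_sub_normalizeFDeriv {u x : E} (hu : u ≠ 0) (hx : x ≠ 0) :
    ‖x‖⁻¹ • x - ‖u‖⁻¹ • u - normalizeFDeriv u (x - u) =
      -((‖u‖ ^ 2 * (‖x‖ - ‖u‖) - ⟪u, x - u⟫ * ‖x‖) / (‖u‖ ^ 3 * ‖x‖)) • u
        - ((‖x‖ - ‖u‖) / (‖u‖ * ‖x‖)) • (x - u) := by
  have ha : ‖u‖ ≠ 0 := norm_ne_zero_iff.2 hu
  have hb : ‖x‖ ≠ 0 := norm_ne_zero_iff.2 hx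
  simp only [normalizeFDeriv, sub_apply, smul_apply, ContinuousLinearMap.id_apply,
    ContinuousLinearMap.smulRight_apply, innerSL_apply_apply]
  generalize ⟪u, x - u⟫ = t
  match_scalars <;> field_simp <;> ring

theorem norm_normalize_sub_sub_le {u x : E} (hu : u ≠ 0) (hx : x ≠ 0) :
    ‖‖x‖⁻¹ • x - ‖u‖⁻¹ • u - normalizeFDeriv u (x - u)‖ ≤ 4 * ‖x - u‖ ^ 2 / (‖u‖ * ‖x‖) := by
  have ha : 0 < ‖u‖ := norm_pos_iff.2 hu
  have hb : 0 < ‖x‖ := norm_pos_iff.2 hx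
  have hba : |‖x‖ - ‖u‖| ≤ ‖x - u‖ := abs_norm_sub_norm_le x u
  have hM := abs_sq_mul_sub_sub_mul_le ha hb (abs_real_inner_le_norm u (x - u)) hba
    (by rw [← norm_add_sq_real, add_sub_cancel])
  rw [normalize_sub_sub_normalizeFDeriv hu hx]
  set a := ‖u‖
  set b := ‖x‖
  set ε := ‖x - u‖
  calc _ ≤ |a ^ 2 * (b - a) - ⟪u, x - u⟫ * b| / (a ^ 3 * b) * a + |b - a| / (a * b) * ε := by
        refine (norm_sub_le _ _).trans_eq ?_
        rw [norm_smul, norm_smul, norm_neg, Real.norm_eq_abs, Real.norm_eq_abs, abs_div, abs_div,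
          abs_of_pos (by positivity : 0 < a ^ 3 * b), abs_of_pos (by positivity : 0 < a * b)]
    _ ≤ 3 * a * ε ^ 2 / (a ^ 3 * b) * a + ε / (a * b) * ε := by gcongr
    _ = 4 * ε ^ 2 / (a * b) := by field_simp; ring

/-- Writing `max ν ‖z‖` instead of splitting on `‖z‖ ≤ ν` makes the map visibly continuous. -/
noncomputable def blockSoftThreshold (ν : ℝ) (z : E) : E := (1 - ν / max ν ‖z‖) • z

variable {ν : ℝ}

theorem blockSoftThreshold_of_norm_le (hν : 0 < ν) {z : E} (hz : ‖z‖ ≤ ν) :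
    blockSoftThreshold ν z = 0 := by
  rw [blockSoftThreshold, max_eq_left hz, div_self hν.ne', sub_self, zero_smul]

theorem blockSoftThreshold_of_le_norm {z : E} (hz : ν ≤ ‖z‖) :
    blockSoftThreshold ν z = z - ν • ‖z‖⁻¹ • z := by
  rw [blockSoftThreshold, max_eq_right hz, sub_smul, one_smul, smul_smul, div_eq_mul_inv]

theorem continuous_blockSoftThreshold (hν : 0 < ν) :
    Continuous (blockSoftThreshold ν : E → E) := by
  unfold blockSoftThreshold
  fun_prop (disch := exact fun z => (lt_max_of_lt_left hν).ne')

theorem subgradient_blockSoftThreshold (hν : 0 < ν) (x z : E) :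
    ν * ‖blockSoftThreshold ν x‖ + ⟪x - blockSoftThreshold ν x, z - blockSoftThreshold ν x⟫
      ≤ ν * ‖z‖ := by
  set c := ν / max ν ‖x‖ with hc
  have hmax : 0 < max ν ‖x‖ := lt_max_of_lt_left hν
  have hc1 : c ≤ 1 := div_le_one_of_le₀ (le_max_left _ _) hmax.le
  have hcx : c * ‖x‖ ≤ ν := by
    rw [hc, div_mul_eq_mul_div, div_le_iff₀ hmax]
    exact mul_le_mul_of_nonneg_left (le_max_right _ _) hν.le
  have hslack : (1 - c) * (ν - c * ‖x‖) = 0 := by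
    rcases le_total ‖x‖ ν with hx | hx
    · rw [hc, max_eq_left hx, div_self hν.ne', sub_self, zero_mul]
    · rw [hc, max_eq_right hx, div_mul_cancel₀ _ (hmax.trans_eq (max_eq_right hx)).ne',
        sub_self, mul_zero]
  have hcs : c * ⟪x, z⟫ ≤ ν * ‖z‖ :=
    calc c * ⟪x, z⟫ ≤ c * (‖x‖ * ‖z‖) := by gcongr; exact real_inner_le_norm x z
      _ ≤ ν * ‖z‖ := by rw [← mul_assoc]; gcongr
  have hsx : x - (1 - c) • x = c • x := by module
  simp only [blockSoftThreshold, ← hc, hsx, norm_smul, Real.norm_eq_abs,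
    abs_of_nonneg (sub_nonneg.2 hc1), inner_sub_right, real_inner_smul_left,
    real_inner_smul_right, real_inner_self_eq_norm_sq]
  linear_combination hcs + ‖x‖ * hslack

theorem eq_blockSoftThreshold_of_isMinOn (hν : 0 < ν) {x p : E}
    (hp : IsMinOn (fun z : E => ν * ‖z‖ + ‖z - x‖ ^ 2 / 2) Set.univ p) :
    p = blockSoftThreshold ν x := by
  have hgrowth := add_norm_sub_sq_le_of_subgradient (h := fun z : E => ν * ‖z‖)
    (subgradient_blockSoftThreshold hν x) p
  have hmin : ν * ‖p‖ + ‖p - x‖ ^ 2 / 2 ≤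
      ν * ‖blockSoftThreshold ν x‖ + ‖blockSoftThreshold ν x - x‖ ^ 2 / 2 :=
    hp (Set.mem_univ _)
  have hsq : ‖p - blockSoftThreshold ν x‖ ^ 2 = 0 :=
    le_antisymm (by linarith) (sq_nonneg _)
  exact sub_eq_zero.1 (norm_eq_zero.1 (pow_eq_zero_iff two_ne_zero |>.1 hsq))

theorem hasFDerivAt_blockSoftThreshold_of_norm_lt (hν : 0 < ν) {u : E} (hu : ‖u‖ < ν) :
    HasFDerivAt (blockSoftThreshold ν) (0 : E →L[ℝ] E) u :=
  (hasFDerivAt_const 0 u).congr_of_eventuallyEq <|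
    (continuous_norm.continuousAt.eventually_lt continuousAt_const hu).mono
      fun _ hz => blockSoftThreshold_of_norm_le hν hz.le

theorem hasFDerivAt_blockSoftThreshold_of_lt_norm (hν : 0 ≤ ν) {u : E} (hu : ν < ‖u‖) :
    HasFDerivAt (blockSoftThreshold ν) (ContinuousLinearMap.id ℝ E - ν • normalizeFDeriv u) u := by
  have hu0 : u ≠ 0 := norm_pos_iff.1 (hν.trans_lt hu)
  exact ((hasFDerivAt_id u).sub ((hasFDerivAt_normalize hu0).const_smul ν)).congr_of_eventuallyEq <|
    (continuousAt_const.eventually_lt continuous_norm.continuousAt hu).mono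
      fun _ hz => blockSoftThreshold_of_le_norm hz.le

theorem blockSoftThreshold_one_add_smul (hν : 0 < ν) {u : E} (hu : ‖u‖ = ν) {t : ℝ}
    (ht : -1 < t) : blockSoftThreshold ν ((1 + t) • u) = max t 0 • u := by
  have hnorm : ‖(1 + t) • u‖ = (1 + t) * ν := by
    rw [norm_smul, Real.norm_of_nonneg (by linarith), hu]
  rcases le_total t 0 with h | h
  · rw [blockSoftThreshold_of_norm_le hν (by rw [hnorm]; nlinarith), max_eq_right h, zero_smul]
  · rw [blockSoftThreshold_of_le_norm (by rw [hnorm]; nlinarith), max_eq_left h, hnorm,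
      smul_smul, smul_smul, ← sub_smul]
    congr 1
    field_simp
    ring

theorem not_differentiableAt_blockSoftThreshold (hν : 0 < ν) {u : E} (hu : ‖u‖ = ν) :
    ¬ DifferentiableAt ℝ (blockSoftThreshold ν) u := by
  intro h
  have hray : DifferentiableAt ℝ (fun t : ℝ => blockSoftThreshold ν ((1 + t) • u)) 0 := by
    have h' : DifferentiableAt ℝ (blockSoftThreshold ν) ((fun t : ℝ => (1 + t) • u) 0) := by
      simpa using h
    exact h'.comp (f := fun t : ℝ => (1 + t) • u) 0 (by fun_prop)
  have hmax : DifferentiableAt ℝ (fun t : ℝ => (ν ^ 2)⁻¹ * ⟪u, max t 0 • u⟫) 0 := by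
    refine ((innerSL ℝ u).differentiableAt.comp 0 ?_).const_mul _
    exact hray.congr_of_eventuallyEq <| (eventually_gt_nhds (by norm_num : (-1 : ℝ) < 0)).mono
      fun t ht => (blockSoftThreshold_one_add_smul hν hu ht).symm
  refine not_differentiableAt_max_zero
    (hmax.congr_of_eventuallyEq (Eventually.of_forall fun t => ?_))
  change max t 0 = (ν ^ 2)⁻¹ * ⟪u, max t 0 • u⟫
  rw [real_inner_smul_right, real_inner_self_eq_norm_sq, hu]
  field_simp

theorem blockSoftThreshold_sub_sub_fderiv_of_norm_lt (hν : 0 < ν) {u x : E} (hu : ‖u‖ < ν)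
    (hx : ‖x‖ ≤ ν) :
    blockSoftThreshold ν x - blockSoftThreshold ν u - fderiv ℝ (blockSoftThreshold ν) u (x - u)
      = 0 := by
  rw [(hasFDerivAt_blockSoftThreshold_of_norm_lt hν hu).fderiv,
    blockSoftThreshold_of_norm_le hν hx, blockSoftThreshold_of_norm_le hν hu.le, zero_apply,
    sub_self, sub_zero]

theorem norm_blockSoftThreshold_sub_sub_fderiv_le_of_lt_norm (hν : 0 < ν) {u x : E}
    (hu : ν < ‖u‖) (hx : ν ≤ ‖x‖) :
    ‖blockSoftThreshold ν x - blockSoftThreshold ν u - fderiv ℝ (blockSoftThreshold ν) u (x - u)‖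
      ≤ 4 / ν * ‖x - u‖ ^ 2 := by
  have hu0 : 0 < ‖u‖ := hν.trans hu
  have hx0 : 0 < ‖x‖ := hν.trans_le hx
  rw [(hasFDerivAt_blockSoftThreshold_of_lt_norm hν.le hu).fderiv,
    blockSoftThreshold_of_le_norm hx, blockSoftThreshold_of_le_norm hu.le]
  calc _ = ν * ‖‖x‖⁻¹ • x - ‖u‖⁻¹ • u - normalizeFDeriv u (x - u)‖ := by
        rw [← norm_smul_of_nonneg hν.le, ← norm_neg]
        congr 1
        simp only [sub_apply, ContinuousLinearMap.id_apply, smul_apply, smul_sub]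
        abel
    _ ≤ ν * (4 * ‖x - u‖ ^ 2 / (ν * ν)) := by
        gcongr
        exact (norm_normalize_sub_sub_le (norm_pos_iff.1 hu0) (norm_pos_iff.1 hx0)).trans
          (by gcongr)
    _ = 4 / ν * ‖x - u‖ ^ 2 := by field_simp

theorem eventually_norm_blockSoftThreshold_sub_sub_fderiv_le (hν : 0 < ν) (x : E) :
    ∀ᶠ u in 𝓝 x, DifferentiableAt ℝ (blockSoftThreshold ν) u →
      ‖blockSoftThreshold ν x - blockSoftThreshold ν u
          - fderiv ℝ (blockSoftThreshold ν) u (x - u)‖ ≤ 4 / ν * ‖x - u‖ ^ 2 := by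
  have hinner : ∀ u : E, ‖u‖ < ν → ‖x‖ ≤ ν → ‖blockSoftThreshold ν x - blockSoftThreshold ν u
      - fderiv ℝ (blockSoftThreshold ν) u (x - u)‖ ≤ 4 / ν * ‖x - u‖ ^ 2 := fun u hu hx => by
    rw [blockSoftThreshold_sub_sub_fderiv_of_norm_lt hν hu hx, norm_zero]
    positivity
  rcases lt_trichotomy ‖x‖ ν with hx | hx | hx
  · filter_upwards [continuous_norm.continuousAt.eventually_lt continuousAt_const hx] with u hu _
    exact hinner u hu hx.le
  · refine Eventually.of_forall fun u hdiff => ?_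
    rcases lt_trichotomy ‖u‖ ν with hu | hu | hu
    · exact hinner u hu hx.le
    · exact absurd hdiff (not_differentiableAt_blockSoftThreshold hν hu)
    · exact norm_blockSoftThreshold_sub_sub_fderiv_le_of_lt_norm hν hu hx.ge
  · filter_upwards [continuousAt_const.eventually_lt continuous_norm.continuousAt hx] with u hu _
    exact norm_blockSoftThreshold_sub_sub_fderiv_le_of_lt_norm hν hu hx.le

end InnerProductSpace

theorem norm_sub_sub_apply_le_of_mem_Bsubdiff {n : ℕ}
    {F : EuclideanSpace ℝ (Fin n) → EuclideanSpace ℝ (Fin n)} {U : Set (EuclideanSpace ℝ (Fin n))}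
    (hU : IsOpen U) {x y : EuclideanSpace ℝ (Fin n)} (hy : y ∈ U) (hF : ContinuousAt F y) {C : ℝ}
    (hbound : ∀ u ∈ U, DifferentiableAt ℝ F u →
      ‖F x - F u - fderiv ℝ F u (x - u)‖ ≤ C * ‖x - u‖ ^ 2)
    {V : EuclideanSpace ℝ (Fin n) →L[ℝ] EuclideanSpace ℝ (Fin n)} (hV : V ∈ Bsubdiff F y) :
    ‖F x - F y - V (x - y)‖ ≤ C * ‖x - y‖ ^ 2 := by
  obtain ⟨u, hu, hdiff, hderiv⟩ := hV
  have hsub : Tendsto (fun k => x - u k) atTop (𝓝 (x - y)) := tendsto_const_nhds.sub hu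
  have happly : Tendsto (fun k => fderiv ℝ F (u k) (x - u k)) atTop (𝓝 (V (x - y))) :=
    (isBoundedBilinearMap_apply.continuous.tendsto (V, x - y)).comp (hderiv.prodMk_nhds hsub)
  refine le_of_tendsto_of_tendsto
    (((tendsto_const_nhds.sub (hF.tendsto.comp hu)).sub happly).norm)
    ((hsub.norm.pow 2).const_mul C) ?_
  filter_upwards [hu.eventually (hU.mem_nhds hy)] with k hk using hbound (u k) hk (hdiff k)

/-- For `g = ‖·‖₂` and `ν > 0`, `∂_B prox_{νg}` is a strong linear Newton
approximation of `prox_{νg}` at every `x`: there exist `C > 0` and `δ > 0` such that for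
every `y` with `‖y − x‖ < δ` and every `V ∈ ∂_B prox_{νg}(y)`,
`‖prox_{νg}(x) − prox_{νg}(y) − V(x − y)‖ ≤ C ‖x − y‖²`. -/
theorem statement7 {n : ℕ} (ν : ℝ) (hν : 0 < ν)
    (prox : EuclideanSpace ℝ (Fin n) → EuclideanSpace ℝ (Fin n))
    (hprox : ∀ x, IsMinOn
      (fun z : EuclideanSpace ℝ (Fin n) => ν * ‖z‖ + ‖z - x‖ ^ 2 / 2)
      Set.univ (prox x))
    (x : EuclideanSpace ℝ (Fin n)) :
    ∃ C > (0 : ℝ), ∃ δ > (0 : ℝ), ∀ y : EuclideanSpace ℝ (Fin n), ‖y - x‖ < δ →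
      ∀ V ∈ Bsubdiff prox y, ‖prox x - prox y - V (x - y)‖ ≤ C * ‖x - y‖ ^ 2 := by
  obtain rfl : prox = blockSoftThreshold ν :=
    funext fun x => eq_blockSoftThreshold_of_isMinOn hν (hprox x)
  obtain ⟨δ, hδ, hball⟩ :=
    Metric.eventually_nhds_iff_ball.1 (eventually_norm_blockSoftThreshold_sub_sub_fderiv_le hν x)
  refine ⟨4 / ν, by positivity, δ, hδ, fun y hy V hV => ?_⟩
  exact norm_sub_sub_apply_le_of_mem_Bsubdiff Metric.isOpen_ball
    (by rwa [Metric.mem_ball, dist_eq_norm]) (continuous_blockSoftThreshold hν).continuousAt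
    hball hV
end

section
/- Let f : ℝ^n → ℝ be a twice continuously differentiable convex function whose Hessian ∇²f is Lipschitz continuous (in operator norm), g : ℝ^n → (-∞, ∞] a proper closed convex function, ν > 0, and x̄ ∈ ℝ^n. Suppose ∂_B prox_{νg} is a strong linear Newton approximation of prox_{νg} at z̄ := x̄ − ν∇f(x̄), i.e., ‖prox_{νg}(z̄) − prox_{νg}(z) − V(z̄ − z)‖₂ = O(‖z̄ − z‖₂²) as z → z̄, uniformly over V ∈ ∂_B prox_{νg}(z). Then ∂F_ν is a strong linear Newton approximation of F_ν at x̄: ‖F_ν(x̄) − F_ν(y) − U(x̄ − y)‖₂ = O(‖x̄ − y‖₂²) as y → x̄, uniformly over U ∈ ∂F_ν(y). -/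
open Filter Topology

/-- The proximal-gradient residual `F_ν(x) = x − prox_{νg}(x − ν ∇f(x))`,
where `prox` denotes the proximal map of `νg`. -/
noncomputable def Fnu {n : ℕ} (f : EuclideanSpace ℝ (Fin n) → ℝ)
    (prox : EuclideanSpace ℝ (Fin n) → EuclideanSpace ℝ (Fin n)) (ν : ℝ)
    (x : EuclideanSpace ℝ (Fin n)) : EuclideanSpace ℝ (Fin n) :=
  x - prox (x - ν • gradient f x)

/-- The set-valued map `∂F_ν(x) = { I − V(I − ν ∇²f(x)) : V ∈ ∂_B prox_{νg}(x − ν∇f(x)) }`. -/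
noncomputable def DFnu {n : ℕ} (f : EuclideanSpace ℝ (Fin n) → ℝ)
    (prox : EuclideanSpace ℝ (Fin n) → EuclideanSpace ℝ (Fin n)) (ν : ℝ)
    (x : EuclideanSpace ℝ (Fin n)) :
    Set (EuclideanSpace ℝ (Fin n) →L[ℝ] EuclideanSpace ℝ (Fin n)) :=
  {U | ∃ V ∈ Bsubdiff prox (x - ν • gradient f x),
    U = 1 - V * (1 - ν • fderiv ℝ (gradient f) x)}


/-!
Write `z̄ = x̄ - ν∇f(x̄)` and `z = y - ν∇f(y)`. For `U = I - V(I - ν∇²f(y))`, the residual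
`F_ν(x̄) - F_ν(y) - U(x̄ - y)` equals `-(prox z̄ - prox z - V(z̄ - z)) + ν V r(y)`, where
`r(y) = ∇f(x̄) - ∇f(y) - ∇²f(y)(x̄ - y)` is the Taylor remainder of `∇f`. The first term is
`O(‖z̄ - z‖²)` by hypothesis and `‖z̄ - z‖ = O(‖x̄ - y‖)`; the second is `O(‖x̄ - y‖²)` because
`∇²f` is Lipschitz and `‖V‖` is bounded, `prox` being Lipschitz.
-/

section Prox

variable {E : Type*} [NormedAddCommGroup E] {g : E → EReal} {ν : ℝ} {prox : E → E}

lemma prox_ne_top (hν : 0 < ν) (hg_nebot : ∀ x, g x ≠ ⊥) (hg_proper : ∃ x, g x ≠ ⊤)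
    (hprox : ∀ x, IsMinOn
      (fun z => (ν : EReal) * g z + ((‖z - x‖ ^ 2 / 2 : ℝ) : EReal)) Set.univ (prox x))
    (x : E) : g (prox x) ≠ ⊤ := by
  intro htop
  obtain ⟨w, hw⟩ := hg_proper
  have hmin := isMinOn_iff.mp (hprox x) w (Set.mem_univ w)
  rw [htop, EReal.coe_mul_top_of_pos hν, EReal.top_add_coe, ← EReal.coe_toReal hw (hg_nebot w),
    ← EReal.coe_mul, ← EReal.coe_add] at hmin
  exact (EReal.coe_lt_top _).not_ge hmin

/-- Obtained by comparing `prox x` with the midpoint of `prox x` and `w`. -/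
lemma prox_objective_growth [InnerProductSpace ℝ E] (hν : 0 < ν) (hg_nebot : ∀ x, g x ≠ ⊥)
    (hg_proper : ∃ x, g x ≠ ⊤)
    (hg_conv : ∀ x y : E, ∀ a b : ℝ, 0 ≤ a → 0 ≤ b → a + b = 1 →
      g (a • x + b • y) ≤ (a : EReal) * g x + (b : EReal) * g y)
    (hprox : ∀ x, IsMinOn
      (fun z => (ν : EReal) * g z + ((‖z - x‖ ^ 2 / 2 : ℝ) : EReal)) Set.univ (prox x))
    (x w : E) (hw : g w ≠ ⊤) :
    ν * (g (prox x)).toReal + ‖prox x - x‖ ^ 2 / 2 + ‖prox x - w‖ ^ 2 / 4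
      ≤ ν * (g w).toReal + ‖w - x‖ ^ 2 / 2 := by
  set u := prox x
  set m := (1 / 2 : ℝ) • u + (1 / 2 : ℝ) • w
  have hu : ((g u).toReal : EReal) = g u :=
    EReal.coe_toReal (prox_ne_top hν hg_nebot hg_proper hprox x) (hg_nebot u)
  have hw' : ((g w).toReal : EReal) = g w := EReal.coe_toReal hw (hg_nebot w)
  have hconv := hg_conv u w (1 / 2) (1 / 2) (by norm_num) (by norm_num) (by norm_num)
  rw [← hu, ← hw', ← EReal.coe_mul, ← EReal.coe_mul, ← EReal.coe_add] at hconv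
  have hm : ((g m).toReal : EReal) = g m :=
    EReal.coe_toReal (ne_top_of_le_ne_top (EReal.coe_ne_top _) hconv) (hg_nebot m)
  rw [← hm, EReal.coe_le_coe_iff] at hconv
  have hmin := isMinOn_iff.mp (hprox x) m (Set.mem_univ m)
  rw [← hu, ← hm, ← EReal.coe_mul, ← EReal.coe_mul, ← EReal.coe_add, ← EReal.coe_add,
    EReal.coe_le_coe_iff] at hmin
  have hpar : ‖m - x‖ ^ 2 = ‖u - x‖ ^ 2 / 2 + ‖w - x‖ ^ 2 / 2 - ‖u - w‖ ^ 2 / 4 := by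
    have h := parallelogram_law_with_norm ℝ (u - x) (w - x)
    have hsum : u - x + (w - x) = (2 : ℝ) • (m - x) := by simp only [m]; module
    rw [hsum, norm_smul, mul_pow, sub_sub_sub_cancel_right] at h
    norm_num at h
    linarith
  nlinarith [mul_le_mul_of_nonneg_left hconv hν.le]

/-- The constant `2` (instead of the optimal `1`) comes from using only midpoint convexity. -/
lemma lipschitzWith_two_prox [InnerProductSpace ℝ E] (hν : 0 < ν) (hg_nebot : ∀ x, g x ≠ ⊥)
    (hg_proper : ∃ x, g x ≠ ⊤)
    (hg_conv : ∀ x y : E, ∀ a b : ℝ, 0 ≤ a → 0 ≤ b → a + b = 1 →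
      g (a • x + b • y) ≤ (a : EReal) * g x + (b : EReal) * g y)
    (hprox : ∀ x, IsMinOn
      (fun z => (ν : EReal) * g z + ((‖z - x‖ ^ 2 / 2 : ℝ) : EReal)) Set.univ (prox x)) :
    LipschitzWith 2 prox := by
  refine LipschitzWith.of_dist_le_mul fun x y => ?_
  have hx := prox_objective_growth hν hg_nebot hg_proper hg_conv hprox x (prox y)
    (prox_ne_top hν hg_nebot hg_proper hprox y)
  have hy := prox_objective_growth hν hg_nebot hg_proper hg_conv hprox y (prox x)
    (prox_ne_top hν hg_nebot hg_proper hprox x)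
  set u := prox x
  set v := prox y
  have hinner : ‖v - x‖ ^ 2 + ‖u - y‖ ^ 2 - ‖u - x‖ ^ 2 - ‖v - y‖ ^ 2
      = 2 * inner ℝ (u - v) (x - y) := by
    simp only [@norm_sub_sq_real, inner_sub_left, inner_sub_right]
    ring
  have hsq : ‖u - v‖ ^ 2 ≤ 2 * ‖u - v‖ * ‖x - y‖ := by
    rw [norm_sub_rev v u] at hy
    nlinarith [real_inner_le_norm (u - v) (x - y)]
  rw [dist_eq_norm, dist_eq_norm, NNReal.coe_ofNat]
  nlinarith [norm_nonneg (u - v), norm_nonneg (x - y)]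

end Prox

lemma norm_le_of_mem_Bsubdiff {n : ℕ} {F : EuclideanSpace ℝ (Fin n) → EuclideanSpace ℝ (Fin n)}
    {K : NNReal} (hF : LipschitzWith K F) {z : EuclideanSpace ℝ (Fin n)}
    {V : EuclideanSpace ℝ (Fin n) →L[ℝ] EuclideanSpace ℝ (Fin n)} (hV : V ∈ Bsubdiff F z) :
    ‖V‖ ≤ K := by
  obtain ⟨u, -, -, hlim⟩ := hV
  exact le_of_tendsto hlim.norm (Eventually.of_forall fun _ => norm_fderiv_le_of_lipschitz ℝ hF)

lemma norm_image_sub_sub_fderiv_le {E F : Type*} [NormedAddCommGroup E] [NormedSpace ℝ E]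
    [NormedAddCommGroup F] [NormedSpace ℝ F] {G : E → F} {L : NNReal}
    (hG : Differentiable ℝ G) (hG' : LipschitzWith L (fderiv ℝ G)) (x y : E) :
    ‖G y - G x - fderiv ℝ G x (y - x)‖ ≤ L * ‖y - x‖ ^ 2 := by
  have hy : y ∈ Metric.closedBall x ‖y - x‖ := by simp [dist_eq_norm]
  have h := (convex_closedBall x ‖y - x‖).norm_image_sub_le_of_norm_fderiv_le'
    (φ := fderiv ℝ G x) (C := L * ‖y - x‖) (fun u _ => hG u)
    (fun u hu => ?_) (Metric.mem_closedBall_self (norm_nonneg _)) hy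
  · rw [sq, ← mul_assoc]; exact h
  · rw [← dist_eq_norm]
    exact (hG'.dist_le_mul u x).trans (mul_le_mul_of_nonneg_left hu L.coe_nonneg)

lemma norm_sub_smul_sub_sub_smul_le {E : Type*} [NormedAddCommGroup E] [NormedSpace ℝ E]
    {G : E → E} {A : E →L[ℝ] E} {L : NNReal} {x y : E} {ν : ℝ} (hν : 0 ≤ ν)
    (hG : ‖G y - G x - A (y - x)‖ ≤ L * ‖y - x‖ ^ 2) (hxy : ‖y - x‖ ≤ 1) :
    ‖(x - ν • G x) - (y - ν • G y)‖ ≤ (1 + ν * (‖A‖ + L)) * ‖x - y‖ := by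
  have hGxy : ‖G y - G x‖ ≤ (‖A‖ + L) * ‖y - x‖ := calc
    ‖G y - G x‖ ≤ ‖G y - G x - A (y - x)‖ + ‖A (y - x)‖ := norm_le_norm_sub_add _ _
    _ ≤ L * ‖y - x‖ ^ 2 + ‖A‖ * ‖y - x‖ := add_le_add hG (A.le_opNorm _)
    _ ≤ (‖A‖ + L) * ‖y - x‖ := by
      nlinarith [mul_le_mul_of_nonneg_left hxy (mul_nonneg L.coe_nonneg (norm_nonneg (y - x)))]
  have hsplit : (x - ν • G x) - (y - ν • G y) = (x - y) + ν • (G y - G x) := by module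
  rw [norm_sub_rev y x] at hGxy
  rw [hsplit]
  calc ‖(x - y) + ν • (G y - G x)‖ ≤ ‖x - y‖ + ν * ‖G y - G x‖ :=
        (norm_add_le _ _).trans (by rw [norm_smul, Real.norm_of_nonneg hν])
    _ ≤ ‖x - y‖ + ν * ((‖A‖ + L) * ‖x - y‖) := by gcongr
    _ = (1 + ν * (‖A‖ + L)) * ‖x - y‖ := by ring

lemma ContDiff.differentiable_gradient {F : Type*} [NormedAddCommGroup F] [InnerProductSpace ℝ F]
    [CompleteSpace F] {f : F → ℝ} (hf : ContDiff ℝ 2 f) : Differentiable ℝ (gradient f) :=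
  (InnerProductSpace.toDual ℝ F).symm.differentiable.comp
    ((hf.fderiv_right (m := 1) (by norm_num)).differentiable one_ne_zero)

lemma Fnu_sub_Fnu_sub_apply {n : ℕ} (f : EuclideanSpace ℝ (Fin n) → ℝ)
    (prox : EuclideanSpace ℝ (Fin n) → EuclideanSpace ℝ (Fin n)) (ν : ℝ)
    (x y : EuclideanSpace ℝ (Fin n))
    (V H : EuclideanSpace ℝ (Fin n) →L[ℝ] EuclideanSpace ℝ (Fin n)) :
    Fnu f prox ν x - Fnu f prox ν y - (1 - V * (1 - ν • H)) (x - y)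
      = -(prox (x - ν • gradient f x) - prox (y - ν • gradient f y)
          - V ((x - ν • gradient f x) - (y - ν • gradient f y)))
        + ν • V (gradient f x - gradient f y - H (x - y)) := by
  simp only [Fnu, sub_apply, one_apply_eq_self, mul_apply_eq_comp,
    smul_apply, map_sub, map_smul, smul_sub]
  abel

theorem statement9_general {n : ℕ} (f : EuclideanSpace ℝ (Fin n) → ℝ)
    (g : EuclideanSpace ℝ (Fin n) → EReal) (ν : ℝ) (hν : 0 < ν)
    (hf : ContDiff ℝ 2 f)
    (L : NNReal) (hhessLip : LipschitzWith L (fun x => fderiv ℝ (gradient f) x))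
    (hg_nebot : ∀ x, g x ≠ ⊥) (hg_proper : ∃ x, g x ≠ ⊤)
    (hg_conv : ∀ x y : EuclideanSpace ℝ (Fin n), ∀ a b : ℝ, 0 ≤ a → 0 ≤ b → a + b = 1 →
      g (a • x + b • y) ≤ (a : EReal) * g x + (b : EReal) * g y)
    (prox : EuclideanSpace ℝ (Fin n) → EuclideanSpace ℝ (Fin n))
    (hprox : ∀ x, IsMinOn
      (fun z => (ν : EReal) * g z + ((‖z - x‖ ^ 2 / 2 : ℝ) : EReal)) Set.univ (prox x))
    (xbar : EuclideanSpace ℝ (Fin n))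
    (hsLNA : ∃ C > (0 : ℝ), ∃ δ > (0 : ℝ), ∀ z : EuclideanSpace ℝ (Fin n),
      ‖z - (xbar - ν • gradient f xbar)‖ < δ → ∀ V ∈ Bsubdiff prox z,
        ‖prox (xbar - ν • gradient f xbar) - prox z - V ((xbar - ν • gradient f xbar) - z)‖
          ≤ C * ‖(xbar - ν • gradient f xbar) - z‖ ^ 2) :
    ∃ C > (0 : ℝ), ∃ δ > (0 : ℝ), ∀ y : EuclideanSpace ℝ (Fin n), ‖y - xbar‖ < δ →
      ∀ U ∈ DFnu f prox ν y,
        ‖Fnu f prox ν xbar - Fnu f prox ν y - U (xbar - y)‖ ≤ C * ‖xbar - y‖ ^ 2 := by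
  obtain ⟨C₀, hC₀, δ₀, hδ₀, hprox_approx⟩ := hsLNA
  have hTaylor := norm_image_sub_sub_fderiv_le hf.differentiable_gradient hhessLip
  have hproxLip := lipschitzWith_two_prox hν hg_nebot hg_proper hg_conv hprox
  set M := 1 + ν * (‖fderiv ℝ (gradient f) xbar‖ + L)
  have hM : 0 < M := by positivity
  refine ⟨C₀ * M ^ 2 + 2 * ν * L, by positivity, min 1 (δ₀ / M), by positivity, ?_⟩
  rintro y hy _ ⟨V, hV, rfl⟩
  have hzz : ‖(xbar - ν • gradient f xbar) - (y - ν • gradient f y)‖ ≤ M * ‖xbar - y‖ :=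
    norm_sub_smul_sub_sub_smul_le hν.le (hTaylor xbar y) (hy.le.trans (min_le_left _ _))
  have hz : ‖(y - ν • gradient f y) - (xbar - ν • gradient f xbar)‖ < δ₀ := by
    rw [norm_sub_rev]
    calc _ ≤ M * ‖xbar - y‖ := hzz
      _ < M * (δ₀ / M) := by
          rw [norm_sub_rev]; gcongr; exact hy.trans_le (min_le_right _ _)
      _ = δ₀ := mul_div_cancel₀ _ hM.ne'
  have hVnorm : ‖V‖ ≤ 2 := by exact_mod_cast norm_le_of_mem_Bsubdiff hproxLip hV
  rw [Fnu_sub_Fnu_sub_apply]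
  calc _ ≤ C₀ * (M * ‖xbar - y‖) ^ 2 + ν * (2 * (L * ‖xbar - y‖ ^ 2)) := by
        refine (norm_add_le _ _).trans (add_le_add ?_ ?_)
        · rw [norm_neg]
          exact (hprox_approx _ hz V hV).trans (by gcongr)
        · rw [norm_smul, Real.norm_of_nonneg hν.le]
          gcongr
          exact (V.le_of_opNorm_le hVnorm _).trans (by gcongr; exact hTaylor y xbar)
    _ = (C₀ * M ^ 2 + 2 * ν * L) * ‖xbar - y‖ ^ 2 := by ring

/-- Proposition 3.2, second part. If moreover `∇²f` is Lipschitz and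
`∂_B prox_{νg}` is a strong linear Newton approximation of `prox_{νg}` at
`z̄ = x̄ − ν∇f(x̄)`, then `∂F_ν` is a strong linear Newton approximation of `F_ν` at `x̄`. -/
theorem statement9 {n : ℕ} (f : EuclideanSpace ℝ (Fin n) → ℝ)
    (g : EuclideanSpace ℝ (Fin n) → EReal) (ν : ℝ) (hν : 0 < ν)
    (hf : ContDiff ℝ 2 f) (hf_conv : ConvexOn ℝ Set.univ f)
    (L : NNReal) (hhessLip : LipschitzWith L (fun x => fderiv ℝ (gradient f) x))
    (hg_nebot : ∀ x, g x ≠ ⊥) (hg_proper : ∃ x, g x ≠ ⊤)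
    (hg_closed : LowerSemicontinuous g)
    (hg_conv : ∀ x y : EuclideanSpace ℝ (Fin n), ∀ a b : ℝ, 0 ≤ a → 0 ≤ b → a + b = 1 →
      g (a • x + b • y) ≤ (a : EReal) * g x + (b : EReal) * g y)
    (prox : EuclideanSpace ℝ (Fin n) → EuclideanSpace ℝ (Fin n))
    (hprox : ∀ x, IsMinOn
      (fun z => (ν : EReal) * g z + ((‖z - x‖ ^ 2 / 2 : ℝ) : EReal)) Set.univ (prox x))
    (xbar : EuclideanSpace ℝ (Fin n))
    (hsLNA : ∃ C > (0 : ℝ), ∃ δ > (0 : ℝ), ∀ z : EuclideanSpace ℝ (Fin n),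
      ‖z - (xbar - ν • gradient f xbar)‖ < δ → ∀ V ∈ Bsubdiff prox z,
        ‖prox (xbar - ν • gradient f xbar) - prox z - V ((xbar - ν • gradient f xbar) - z)‖
          ≤ C * ‖(xbar - ν • gradient f xbar) - z‖ ^ 2) :
    ∃ C > (0 : ℝ), ∃ δ > (0 : ℝ), ∀ y : EuclideanSpace ℝ (Fin n), ‖y - xbar‖ < δ →
      ∀ U ∈ DFnu f prox ν y,
        ‖Fnu f prox ν xbar - Fnu f prox ν y - U (xbar - y)‖ ≤ C * ‖xbar - y‖ ^ 2 :=
  statement9_general f g ν hν hf L hhessLip hg_nebot hg_proper hg_conv prox hprox xbar hsLNA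
end

section
/- Let f : ℝ^n → ℝ be twice continuously differentiable and μ-strongly convex with μ > 0, g : ℝ^n → (-∞, ∞] a proper closed convex function, ν > 0, and let x* satisfy F_ν(x*) = 0. Suppose ∂_B prox_{νg} is a linear Newton approximation of prox_{νg} at x* − ν∇f(x*), i.e., ‖prox_{νg}(x* − ν∇f(x*)) − prox_{νg}(z) − V((x* − ν∇f(x*)) − z)‖₂ = o(‖(x* − ν∇f(x*)) − z‖₂) as z → x* − ν∇f(x*), uniformly over V ∈ ∂_B prox_{νg}(z). Then there exist ε > 0 and Δ > 0 such that: for every sequence (x^(k)) and matrices (B^(k)) with ‖x^(1) − x*‖₂ < ε, ‖B^(k) − ∇²f(x^(k))‖ < Δ for all k, and x^(k+1) = x^(k) − W_k^{-1} F_ν(x^(k)) where W_k = I − V_k(I − ν B^(k)) for some V_k ∈ ∂_B prox_{νg}(x^(k) − ν∇f(x^(k))), each W_k is invertible and ‖x^(k+1) − x*‖₂ ≤ (1/2)‖x^(k) − x*‖₂ for all k; in particular x^(k) converges to x* at least linearly. -/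
open Filter Topology RealInnerProductSpace

variable {E : Type*} [NormedAddCommGroup E]

theorem ne_top_of_isMinOn_prox {g : E → EReal} {ν : ℝ} {w p : E} (hg_nebot : ∀ x, g x ≠ ⊥)
    (hg_proper : ∃ x, g x ≠ ⊤) (hν : 0 < ν)
    (hp : IsMinOn (fun z => (ν : EReal) * g z + ((‖z - w‖ ^ 2 / 2 : ℝ) : EReal)) Set.univ p) :
    g p ≠ ⊤ := by
  obtain ⟨x, hx⟩ := hg_proper
  have hmin := isMinOn_univ_iff.mp hp x
  rw [← EReal.coe_toReal hx (hg_nebot x), ← EReal.coe_mul, ← EReal.coe_add] at hmin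
  intro htop
  rw [htop, EReal.coe_mul_top_of_pos hν, EReal.top_add_coe, top_le_iff] at hmin
  exact EReal.coe_ne_top _ hmin

variable [InnerProductSpace ℝ E]

def FirmlyNonexpansive (T : E → E) : Prop :=
  ∀ x y, ‖T x - T y‖ ^ 2 ≤ ⟪x - y, T x - T y⟫

section Prox

variable {g : E → EReal} {ν : ℝ} {w p : E}

/-- The optimality condition `w - p ∈ ν ∂g(p)` of the proximal point `p` of `w`. -/
theorem inner_sub_le_of_isMinOn_prox (hg_nebot : ∀ x, g x ≠ ⊥)
    (hg_conv : ∀ x y : E, ∀ a b : ℝ, 0 ≤ a → 0 ≤ b → a + b = 1 →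
      g (a • x + b • y) ≤ (a : EReal) * g x + (b : EReal) * g y)
    (hν : 0 < ν)
    (hp : IsMinOn (fun z => (ν : EReal) * g z + ((‖z - w‖ ^ 2 / 2 : ℝ) : EReal)) Set.univ p)
    (hp_top : g p ≠ ⊤) {z : E} (hz_top : g z ≠ ⊤) :
    ⟪w - p, z - p⟫ ≤ ν * ((g z).toReal - (g p).toReal) := by
  set a := (g p).toReal
  set b := (g z).toReal
  have ha : g p = a := (EReal.coe_toReal hp_top (hg_nebot p)).symm
  have hb : g z = b := (EReal.coe_toReal hz_top (hg_nebot z)).symm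
  have hsegment : ∀ t ∈ Set.Ioo (0 : ℝ) 1,
      ⟪w - p, z - p⟫ ≤ ν * (b - a) + t * (‖z - p‖ ^ 2 / 2) := by
    rintro t ⟨ht0, ht1⟩
    have hconv : g (p + t • (z - p)) ≤ (((1 - t) * a + t * b : ℝ) : EReal) := by
      have h := hg_conv p z (1 - t) t (by linarith) ht0.le (by ring)
      rwa [show (1 - t) • p + t • z = p + t • (z - p) by module, ha, hb, ← EReal.coe_mul,
        ← EReal.coe_mul, ← EReal.coe_add] at h
    have hmin : ν * a + ‖p - w‖ ^ 2 / 2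
        ≤ ν * ((1 - t) * a + t * b) + ‖p + t • (z - p) - w‖ ^ 2 / 2 := by
      have h := isMinOn_univ_iff.mp hp (p + t • (z - p))
      rw [ha, ← EReal.coe_mul, ← EReal.coe_add] at h
      have h' := h.trans (add_le_add_left
        (mul_le_mul_of_nonneg_left hconv (EReal.coe_nonneg.mpr hν.le)) _)
      exact_mod_cast h'
    have hexpand : ‖p + t • (z - p) - w‖ ^ 2
        = ‖p - w‖ ^ 2 + 2 * (t * ⟪p - w, z - p⟫) + t ^ 2 * ‖z - p‖ ^ 2 := by
      rw [show p + t • (z - p) - w = (p - w) + t • (z - p) by abel, norm_add_sq_real,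
        real_inner_smul_right, norm_smul, Real.norm_eq_abs, mul_pow, sq_abs]
    rw [hexpand] at hmin
    have hneg : ⟪w - p, z - p⟫ = -⟪p - w, z - p⟫ := by
      rw [← inner_neg_left, neg_sub]
    rw [hneg]
    nlinarith
  have hlim : Tendsto (fun t : ℝ => ν * (b - a) + t * (‖z - p‖ ^ 2 / 2)) (𝓝[>] 0)
      (𝓝 (ν * (b - a))) := by
    refine tendsto_nhdsWithin_of_tendsto_nhds ?_
    simpa using ((continuous_id.mul continuous_const).const_add (ν * (b - a))).tendsto (0 : ℝ)
  exact ge_of_tendsto hlim (eventually_of_mem (Ioo_mem_nhdsGT one_pos) hsegment)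

theorem firmlyNonexpansive_prox (hg_nebot : ∀ x, g x ≠ ⊥) (hg_proper : ∃ x, g x ≠ ⊤)
    (hg_conv : ∀ x y : E, ∀ a b : ℝ, 0 ≤ a → 0 ≤ b → a + b = 1 →
      g (a • x + b • y) ≤ (a : EReal) * g x + (b : EReal) * g y)
    (hν : 0 < ν) {prox : E → E}
    (hprox : ∀ w, IsMinOn
      (fun z => (ν : EReal) * g z + ((‖z - w‖ ^ 2 / 2 : ℝ) : EReal)) Set.univ (prox w)) :
    FirmlyNonexpansive prox := by
  intro w₁ w₂
  have htop w := ne_top_of_isMinOn_prox hg_nebot hg_proper hν (hprox w)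
  have h₁ := inner_sub_le_of_isMinOn_prox hg_nebot hg_conv hν (hprox w₁) (htop w₁) (htop w₂)
  have h₂ := inner_sub_le_of_isMinOn_prox hg_nebot hg_conv hν (hprox w₂) (htop w₂) (htop w₁)
  have hsum : ⟪w₁ - w₂, prox w₁ - prox w₂⟫ - ‖prox w₁ - prox w₂‖ ^ 2
      = -(⟪w₁ - prox w₁, prox w₂ - prox w₁⟫ + ⟪w₂ - prox w₂, prox w₁ - prox w₂⟫) := by
    rw [← real_inner_self_eq_norm_sq]
    simp only [inner_sub_left, inner_sub_right, real_inner_comm (prox w₁)]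
    ring
  linarith

end Prox

theorem FirmlyNonexpansive.norm_fderiv_apply_sq_le {T : E → E} (hT : FirmlyNonexpansive T)
    {u : E} (hu : DifferentiableAt ℝ T u) (h : E) :
    ‖fderiv ℝ T u h‖ ^ 2 ≤ ⟪h, fderiv ℝ T u h⟫ := by
  have hline : HasDerivAt (fun t : ℝ => u + t • h) h 0 := by
    simpa using ((hasDerivAt_id (0 : ℝ)).smul_const h).const_add u
  have hderiv : HasDerivAt (fun t : ℝ => T (u + t • h)) (fderiv ℝ T u h) 0 :=
    (by simpa using hu.hasFDerivAt : HasFDerivAt T (fderiv ℝ T u) (u + (0 : ℝ) • h))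
      |>.comp_hasDerivAt 0 hline
  have hslope := (hasDerivAt_iff_tendsto_slope.mp hderiv).mono_left
    (nhdsWithin_mono (0 : ℝ) (s := Set.Ioi 0) fun t ht => ne_of_gt ht)
  refine le_of_tendsto_of_tendsto (hslope.norm.pow 2) (tendsto_const_nhds.inner hslope) ?_
  filter_upwards [self_mem_nhdsWithin] with t (ht : 0 < t)
  have hfirm := hT (u + t • h) u
  rw [add_sub_cancel_left, real_inner_smul_left] at hfirm
  simp only [slope, vsub_eq_sub, zero_smul, add_zero, sub_zero]
  rw [real_inner_smul_right, norm_smul, Real.norm_eq_abs, abs_of_pos (inv_pos.mpr ht), mul_pow]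
  calc t⁻¹ ^ 2 * ‖T (u + t • h) - T u‖ ^ 2
      ≤ t⁻¹ ^ 2 * (t * ⟪h, T (u + t • h) - T u⟫) := by gcongr
    _ = t⁻¹ * ⟪h, T (u + t • h) - T u⟫ := by field_simp

theorem isClosed_setOf_norm_apply_sq_le_inner :
    IsClosed {V : E →L[ℝ] E | ∀ h, ‖V h‖ ^ 2 ≤ ⟪h, V h⟫} := by
  simp only [Set.ofPred_forall]
  refine isClosed_iInter fun h => isClosed_le ?_ ?_
  all_goals fun_prop

theorem FirmlyNonexpansive.norm_apply_sq_le_inner_of_mem_bsubdiff {n : ℕ}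
    {T : EuclideanSpace ℝ (Fin n) → EuclideanSpace ℝ (Fin n)} (hT : FirmlyNonexpansive T)
    {z : EuclideanSpace ℝ (Fin n)} {V : EuclideanSpace ℝ (Fin n) →L[ℝ] EuclideanSpace ℝ (Fin n)}
    (hV : V ∈ Bsubdiff T z) (h : EuclideanSpace ℝ (Fin n)) : ‖V h‖ ^ 2 ≤ ⟪h, V h⟫ := by
  obtain ⟨u, -, hdiff, hlim⟩ := hV
  exact isClosed_setOf_norm_apply_sq_le_inner.mem_of_tendsto hlim
    (Eventually.of_forall fun k => hT.norm_fderiv_apply_sq_le (hdiff k)) h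

theorem norm_apply_le_of_norm_apply_sq_le_inner {V : E →L[ℝ] E}
    (hV : ∀ h, ‖V h‖ ^ 2 ≤ ⟪h, V h⟫) (h : E) : ‖V h‖ ≤ ‖h‖ := by
  have := (hV h).trans (real_inner_le_norm h (V h))
  nlinarith [norm_nonneg (V h), norm_nonneg h]

theorem coercive_of_norm_sub_le {A B : E →L[ℝ] E} {μ δ : ℝ}
    (hA : ∀ w, μ * ‖w‖ ^ 2 ≤ ⟪w, A w⟫) (hBA : ‖B - A‖ ≤ δ) (w : E) :
    (μ - δ) * ‖w‖ ^ 2 ≤ ⟪w, B w⟫ := by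
  have hsplit : ⟪w, B w⟫ = ⟪w, A w⟫ + ⟪w, (B - A) w⟫ := by
    rw [← inner_add_right, sub_apply, add_sub_cancel]
  have hperturb : |⟪w, (B - A) w⟫| ≤ δ * ‖w‖ ^ 2 :=
    calc |⟪w, (B - A) w⟫| ≤ ‖w‖ * (‖B - A‖ * ‖w‖) :=
          (abs_real_inner_le_norm _ _).trans (by gcongr; exact (B - A).le_opNorm w)
      _ ≤ δ * ‖w‖ ^ 2 := by nlinarith [norm_nonneg w]
  linarith [hA w, neg_abs_le ⟪w, (B - A) w⟫]

theorem norm_le_norm_one_sub_mul_apply {V B : E →L[ℝ] E} {m K ν : ℝ}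
    (hV : ∀ h, ‖V h‖ ^ 2 ≤ ⟪h, V h⟫) (hK : 0 ≤ K) (hν : 0 < ν)
    (hB : ∀ w, m * ‖w‖ ^ 2 ≤ ⟪w, B w⟫) (hBK : ‖B‖ ≤ K) (w : E) :
    ν * m / (1 + ν * K) * ‖w‖ ≤ ‖(1 - V * (1 - ν • B)) w‖ := by
  set r := (1 - V * (1 - ν • B)) w
  have hVr : V (w - ν • B w) = w - r := by simp [r]
  have hfirm := hV (w - ν • B w)
  rw [hVr] at hfirm
  have hexpand : ⟪w - ν • B w, w - r⟫ - ‖w - r‖ ^ 2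
      = ⟪w, r⟫ - ‖r‖ ^ 2 - ν * ⟪w, B w⟫ + ν * ⟪B w, r⟫ := by
    rw [← real_inner_self_eq_norm_sq, ← real_inner_self_eq_norm_sq]
    simp only [inner_sub_left, inner_sub_right, real_inner_smul_left, real_inner_comm w (B w),
      real_inner_comm w r]
    ring
  have hBw : ⟪B w, r⟫ ≤ K * ‖w‖ * ‖r‖ :=
    (real_inner_le_norm _ _).trans (by gcongr; exact (B.le_opNorm w).trans (by gcongr))
  have hmain : ν * m * ‖w‖ ^ 2 ≤ (1 + ν * K) * ‖w‖ * ‖r‖ := by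
    nlinarith [hB w, real_inner_le_norm w r, sq_nonneg ‖r‖]
  rcases (norm_nonneg w).eq_or_lt with hw | hw
  · simp [← hw]
  · rw [div_mul_eq_mul_div, div_le_iff₀ (by positivity)]
    nlinarith

theorem ContinuousLinearMap.bijective_of_mul_norm_le [FiniteDimensional ℝ E] (W : E →L[ℝ] E)
    {c : ℝ} (hc : 0 < c) (hW : ∀ w, c * ‖w‖ ≤ ‖W w‖) : Function.Bijective W := by
  have hinj : Function.Injective W := by
    refine (injective_iff_map_eq_zero W).mpr fun w hw => norm_le_zero_iff.mp ?_
    nlinarith [hW w, norm_nonneg w, hw ▸ norm_zero (E := E)]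
  exact ⟨hinj, (LinearMap.injective_iff_surjective (f := (W : E →ₗ[ℝ] E))).mp hinj⟩

theorem ContDiff.gradient [CompleteSpace E] {f : E → ℝ} {k : WithTop ℕ∞}
    (hf : ContDiff ℝ (k + 1) f) : ContDiff ℝ k (gradient f) :=
  (InnerProductSpace.toDual ℝ E).symm.toContinuousLinearEquiv.contDiff.comp
    (hf.fderiv_right le_rfl)

theorem ContDiff.isLittleO_sub_sub_fderiv_apply {F : Type*} [NormedAddCommGroup F]
    [NormedSpace ℝ F] {φ : E → F} (hφ : ContDiff ℝ 1 φ) (x : E) :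
    (fun y => φ y - φ x - fderiv ℝ φ y (y - x)) =o[𝓝 x] (fun y => y - x) := by
  have hfderiv : (fun y => φ y - φ x - fderiv ℝ φ x (y - x)) =o[𝓝 x] (fun y => y - x) :=
    (hφ.differentiable one_ne_zero x).hasFDerivAt.isLittleO
  have hcont : (fun y => (fderiv ℝ φ y - fderiv ℝ φ x) (y - x)) =o[𝓝 x] (fun y => y - x) := by
    refine Asymptotics.IsLittleO.of_bound fun c hc => ?_
    have hnear : ∀ᶠ y in 𝓝 x, ‖fderiv ℝ φ y - fderiv ℝ φ x‖ < c := by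
      simpa [dist_eq_norm] using
        Metric.tendsto_nhds.mp ((hφ.continuous_fderiv one_ne_zero).tendsto x) c hc
    filter_upwards [hnear] with y hy
    exact ((fderiv ℝ φ y - fderiv ℝ φ x).le_opNorm _).trans (by gcongr)
  refine (hfderiv.sub hcont).congr_left fun y => ?_
  rw [sub_apply]
  abel

section NewtonStep

variable {prox G : E → E} {V B H : E →L[ℝ] E} {ν : ℝ} {x₀ y y' : E}

theorem newtonStep_error_eq (hfix : prox (x₀ - ν • G x₀) = x₀)
    (hstep : (1 - V * (1 - ν • B)) (y' - y) = -(y - prox (y - ν • G y))) :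
    (1 - V * (1 - ν • B)) (y' - x₀) = ν • V (B (y - x₀) - (G y - G x₀)) -
      (prox (x₀ - ν • G x₀) - prox (y - ν • G y) - V ((x₀ - ν • G x₀) - (y - ν • G y))) := by
  rw [show y' - x₀ = (y' - y) + (y - x₀) by abel, map_add, hstep, hfix]
  simp only [sub_apply, one_apply_eq_self, mul_apply_eq_comp, smul_apply, map_sub, map_smul]
  module

theorem norm_newtonStep_error_le {L η Δ ε₀ : ℝ} (hν : 0 ≤ ν) (hε₀ : 0 ≤ ε₀)
    (hV : ∀ h, ‖V h‖ ≤ ‖h‖) (hfix : prox (x₀ - ν • G x₀) = x₀)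
    (hstep : (1 - V * (1 - ν • B)) (y' - y) = -(y - prox (y - ν • G y)))
    (hLip : ‖G y - G x₀‖ ≤ L * ‖y - x₀‖)
    (hTaylor : ‖G y - G x₀ - H (y - x₀)‖ ≤ η * ‖y - x₀‖) (hBH : ‖B - H‖ ≤ Δ)
    (hLNA : ‖prox (x₀ - ν • G x₀) - prox (y - ν • G y) - V ((x₀ - ν • G x₀) - (y - ν • G y))‖
      ≤ ε₀ * ‖(x₀ - ν • G x₀) - (y - ν • G y)‖) :
    ‖(1 - V * (1 - ν • B)) (y' - x₀)‖ ≤ (ε₀ * (1 + ν * L) + ν * (Δ + η)) * ‖y - x₀‖ := by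
  have hz : ‖(x₀ - ν • G x₀) - (y - ν • G y)‖ ≤ (1 + ν * L) * ‖y - x₀‖ := by
    rw [show (x₀ - ν • G x₀) - (y - ν • G y) = ν • (G y - G x₀) - (y - x₀) by module]
    refine (norm_sub_le _ _).trans ?_
    rw [norm_smul, Real.norm_of_nonneg hν]
    nlinarith
  have hquasi : ‖B (y - x₀) - (G y - G x₀)‖ ≤ (Δ + η) * ‖y - x₀‖ := by
    rw [show B (y - x₀) - (G y - G x₀) = (B - H) (y - x₀) - (G y - G x₀ - H (y - x₀)) by
      rw [sub_apply]; abel]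
    refine (norm_sub_le _ _).trans ?_
    have := (B - H).le_opNorm (y - x₀)
    nlinarith [norm_nonneg (y - x₀)]
  rw [newtonStep_error_eq hfix hstep]
  refine (norm_sub_le _ _).trans ?_
  rw [norm_smul, Real.norm_of_nonneg hν]
  have := (hV _).trans hquasi
  nlinarith [norm_nonneg (y - x₀)]

end NewtonStep

def IsLinearNewtonApprox (T : E → E) (S : E → Set (E →L[ℝ] E)) (z₀ : E) : Prop :=
  ∀ ε > (0 : ℝ), ∃ δ > (0 : ℝ), ∀ z, ‖z - z₀‖ < δ → ∀ V ∈ S z,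
    ‖T z₀ - T z - V (z₀ - z)‖ ≤ ε * ‖z₀ - z‖

theorem eventually_newtonStep_contracts [FiniteDimensional ℝ E] {G prox : E → E}
    {S : E → Set (E →L[ℝ] E)} {μ ν : ℝ} {x₀ : E} (hG : ContDiff ℝ 1 G) (hμ : 0 < μ)
    (hstrong : ∀ x v, μ * ‖v‖ ^ 2 ≤ ⟪v, fderiv ℝ G x v⟫) (hν : 0 < ν)
    (hS : ∀ z, ∀ V ∈ S z, ∀ h, ‖V h‖ ^ 2 ≤ ⟪h, V h⟫) (hfix : prox (x₀ - ν • G x₀) = x₀)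
    (hLNA : IsLinearNewtonApprox prox S (x₀ - ν • G x₀)) :
    ∃ Δ > (0 : ℝ), ∀ᶠ y in 𝓝 x₀, ∀ (B V : E →L[ℝ] E) (y' : E),
      ‖B - fderiv ℝ G y‖ < Δ → V ∈ S (y - ν • G y) →
      (1 - V * (1 - ν • B)) (y' - y) = -(y - prox (y - ν • G y)) →
      Function.Bijective ((1 - V * (1 - ν • B) : E →L[ℝ] E)) ∧ ‖y' - x₀‖ ≤ 1 / 2 * ‖y - x₀‖ := by
  set H := fderiv ℝ G
  set M := ‖H x₀‖ + 1
  set c := ν * (μ / 2) / (1 + ν * (M + μ / 2))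
  have hc : 0 < c := by positivity
  obtain ⟨L, hL, hLip⟩ := (hG.differentiable one_ne_zero x₀).hasFDerivAt.isBigO_sub.exists_pos
  set ε₀ := c / (8 * (1 + ν * L))
  obtain ⟨δ, hδ, hLNAδ⟩ := hLNA ε₀ (by positivity)
  set η := c / (8 * ν)
  set Δ := min (μ / 2) η
  -- each of the three error terms of the step costs at most `c / 8` per unit of `‖y - x₀‖`
  have hconst : ε₀ * (1 + ν * L) + ν * (η + η) ≤ c / 2 := by
    have hε₀ : ε₀ * (1 + ν * L) = c / 8 := by simp only [ε₀]; field_simp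
    have hη : ν * η = c / 8 := by simp only [η]; field_simp
    linarith
  refine ⟨Δ, by positivity, ?_⟩
  have hH : ∀ᶠ y in 𝓝 x₀, ‖H y‖ < M :=
    (hG.continuous_fderiv one_ne_zero).norm.continuousAt.eventually_lt continuousAt_const
      (lt_add_one _)
  have hz : ∀ᶠ y in 𝓝 x₀, ‖(y - ν • G y) - (x₀ - ν • G x₀)‖ < δ := by
    have hcont : Continuous fun y => y - ν • G y := by
      have := hG.continuous; fun_prop
    simpa [dist_eq_norm] using Metric.tendsto_nhds.mp (hcont.tendsto x₀) δ hδ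
  filter_upwards [hH, hLip.bound,
    (hG.isLittleO_sub_sub_fderiv_apply x₀).def (c := η) (by positivity), hz]
    with y hHy hLy hTy hzy
  intro B V y' hB hV hstep
  have hBH : ‖B - H y‖ ≤ μ / 2 := hB.le.trans (min_le_left _ _)
  have hcoercive : ∀ w, μ / 2 * ‖w‖ ^ 2 ≤ ⟪w, B w⟫ := fun w => by
    linarith [coercive_of_norm_sub_le (hstrong y) hBH w]
  have hbound : ‖B‖ ≤ M + μ / 2 := by linarith [norm_le_insert' B (H y)]
  have hlower := norm_le_norm_one_sub_mul_apply (hS _ V hV) (by positivity) hν hcoercive hbound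
  have herror := norm_newtonStep_error_le hν.le (by positivity)
    (norm_apply_le_of_norm_apply_sq_le_inner (hS _ V hV)) hfix hstep hLy hTy
    (hB.le.trans (min_le_right _ _)) (hLNAδ _ hzy V hV)
  refine ⟨(1 - V * (1 - ν • B)).bijective_of_mul_norm_le hc hlower, ?_⟩
  refine le_of_mul_le_mul_left ?_ hc
  calc c * ‖y' - x₀‖ ≤ ‖(1 - V * (1 - ν • B)) (y' - x₀)‖ := hlower _
    _ ≤ (ε₀ * (1 + ν * L) + ν * (η + η)) * ‖y - x₀‖ := herror
    _ ≤ c / 2 * ‖y - x₀‖ := by gcongr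
    _ = c * (1 / 2 * ‖y - x₀‖) := by ring

theorem statement16_general {n : ℕ} (f : EuclideanSpace ℝ (Fin n) → ℝ) (μ : ℝ) (hμ : 0 < μ)
    (hf : ContDiff ℝ 2 f)
    (hstrong : ∀ x v : EuclideanSpace ℝ (Fin n), μ * ‖v‖ ^ 2 ≤ ⟪v, fderiv ℝ (gradient f) x v⟫)
    (g : EuclideanSpace ℝ (Fin n) → EReal)
    (hg_nebot : ∀ x, g x ≠ ⊥) (hg_proper : ∃ x, g x ≠ ⊤)
    (hg_conv : ∀ x y : EuclideanSpace ℝ (Fin n), ∀ a b : ℝ, 0 ≤ a → 0 ≤ b → a + b = 1 →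
      g (a • x + b • y) ≤ (a : EReal) * g x + (b : EReal) * g y)
    (ν : ℝ) (hν : 0 < ν)
    (prox : EuclideanSpace ℝ (Fin n) → EuclideanSpace ℝ (Fin n))
    (hprox : ∀ w, IsMinOn
      (fun z => (ν : EReal) * g z + ((‖z - w‖ ^ 2 / 2 : ℝ) : EReal)) Set.univ (prox w))
    (xstar : EuclideanSpace ℝ (Fin n)) (hzero : Fnu f prox ν xstar = 0)
    (hLNA : ∀ ε > (0 : ℝ), ∃ δ > (0 : ℝ), ∀ z : EuclideanSpace ℝ (Fin n),
      ‖z - (xstar - ν • gradient f xstar)‖ < δ → ∀ V ∈ Bsubdiff prox z,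
        ‖prox (xstar - ν • gradient f xstar) - prox z - V ((xstar - ν • gradient f xstar) - z)‖
          ≤ ε * ‖(xstar - ν • gradient f xstar) - z‖) :
    ∃ ε > (0 : ℝ), ∃ Δ > (0 : ℝ), ∀ (x : ℕ → EuclideanSpace ℝ (Fin n))
      (B V : ℕ → (EuclideanSpace ℝ (Fin n) →L[ℝ] EuclideanSpace ℝ (Fin n))),
      ‖x 0 - xstar‖ < ε →
      (∀ k, ‖B k - fderiv ℝ (gradient f) (x k)‖ < Δ) →
      (∀ k, V k ∈ Bsubdiff prox (x k - ν • gradient f (x k))) →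
      (∀ k, (1 - V k * (1 - ν • B k)) (x (k + 1) - x k) = -(Fnu f prox ν (x k))) →
      (∀ k, Function.Bijective
        ((1 - V k * (1 - ν • B k) : EuclideanSpace ℝ (Fin n) →L[ℝ] EuclideanSpace ℝ (Fin n)))) ∧
      ∀ k, ‖x (k + 1) - xstar‖ ≤ (1 / 2 : ℝ) * ‖x k - xstar‖ := by
  have hfirm := firmlyNonexpansive_prox hg_nebot hg_proper hg_conv hν hprox
  obtain ⟨Δ, hΔ, hcontract⟩ := eventually_newtonStep_contracts hf.gradient hμ hstrong hν
    (fun _ _ hV => hfirm.norm_apply_sq_le_inner_of_mem_bsubdiff hV) (sub_eq_zero.mp hzero).symm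
    hLNA
  obtain ⟨ε, hε, hball⟩ := Metric.eventually_nhds_iff_ball.mp hcontract
  refine ⟨ε, hε, Δ, hΔ, fun x B V hx0 hB hV hstep => ?_⟩
  have hnext : ∀ k, ‖x k - xstar‖ < ε → _ := fun k hk =>
    hball (x k) (mem_ball_iff_norm.mpr hk) (B k) (V k) (x (k + 1)) (hB k) (hV k) (hstep k)
  have hclose : ∀ k, ‖x k - xstar‖ < ε := by
    intro k
    induction k with
    | zero => exact hx0
    | succ k ih => linarith [(hnext k ih).2, norm_nonneg (x k - xstar)]
  exact ⟨fun k => (hnext k (hclose k)).1, fun k => (hnext k (hclose k)).2⟩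

/-- Theorem 4.1, local linear convergence of the hybrid linear
quasi-Newton method. There exist `ε > 0` and `Δ > 0` such that any sequence started
with `‖x^(1) − x*‖ < ε`, with approximation matrices satisfying
`‖B^(k) − ∇²f(x^(k))‖ < Δ` and updates `W_k (x^(k+1) − x^(k)) = −F_ν(x^(k))` where
`W_k = I − V_k(I − ν B^(k))`, `V_k ∈ ∂_B prox_{νg}(x^(k) − ν∇f(x^(k)))`, has every `W_k`
invertible and satisfies `‖x^(k+1) − x*‖ ≤ (1/2)‖x^(k) − x*‖` for all `k`. -/
theorem statement16 {n : ℕ} (f : EuclideanSpace ℝ (Fin n) → ℝ) (μ : ℝ) (hμ : 0 < μ)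
    (hf : ContDiff ℝ 2 f)
    (hstrong : ∀ x v : EuclideanSpace ℝ (Fin n), μ * ‖v‖ ^ 2 ≤ ⟪v, fderiv ℝ (gradient f) x v⟫)
    (g : EuclideanSpace ℝ (Fin n) → EReal)
    (hg_nebot : ∀ x, g x ≠ ⊥) (hg_proper : ∃ x, g x ≠ ⊤)
    (hg_closed : LowerSemicontinuous g)
    (hg_conv : ∀ x y : EuclideanSpace ℝ (Fin n), ∀ a b : ℝ, 0 ≤ a → 0 ≤ b → a + b = 1 →
      g (a • x + b • y) ≤ (a : EReal) * g x + (b : EReal) * g y)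
    (ν : ℝ) (hν : 0 < ν)
    (prox : EuclideanSpace ℝ (Fin n) → EuclideanSpace ℝ (Fin n))
    (hprox : ∀ w, IsMinOn
      (fun z => (ν : EReal) * g z + ((‖z - w‖ ^ 2 / 2 : ℝ) : EReal)) Set.univ (prox w))
    (xstar : EuclideanSpace ℝ (Fin n)) (hzero : Fnu f prox ν xstar = 0)
    (hLNA : ∀ ε > (0 : ℝ), ∃ δ > (0 : ℝ), ∀ z : EuclideanSpace ℝ (Fin n),
      ‖z - (xstar - ν • gradient f xstar)‖ < δ → ∀ V ∈ Bsubdiff prox z,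
        ‖prox (xstar - ν • gradient f xstar) - prox z - V ((xstar - ν • gradient f xstar) - z)‖
          ≤ ε * ‖(xstar - ν • gradient f xstar) - z‖) :
    ∃ ε > (0 : ℝ), ∃ Δ > (0 : ℝ), ∀ (x : ℕ → EuclideanSpace ℝ (Fin n))
      (B V : ℕ → (EuclideanSpace ℝ (Fin n) →L[ℝ] EuclideanSpace ℝ (Fin n))),
      ‖x 0 - xstar‖ < ε →
      (∀ k, ‖B k - fderiv ℝ (gradient f) (x k)‖ < Δ) →
      (∀ k, V k ∈ Bsubdiff prox (x k - ν • gradient f (x k))) →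
      (∀ k, (1 - V k * (1 - ν • B k)) (x (k + 1) - x k) = -(Fnu f prox ν (x k))) →
      (∀ k, Function.Bijective
        ((1 - V k * (1 - ν • B k) : EuclideanSpace ℝ (Fin n) →L[ℝ] EuclideanSpace ℝ (Fin n)))) ∧
      ∀ k, ‖x (k + 1) - xstar‖ ≤ (1 / 2 : ℝ) * ‖x k - xstar‖ :=
  statement16_general f μ hμ hf hstrong g hg_nebot hg_proper hg_conv ν hν prox hprox xstar hzero
    hLNA
end
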